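/- Let G be a finite simple graph on vertex set A ⊔ B with |A| = k, |B| = n, and biadjacency matrix G_AB ∈ F_2^{k×n} of rank k over F_2. Let p ∈ [0,1], let ρ_p be the graph state of G after uniform dephasing with parameter p on every qubit, and let ρ_B := Tr_A(ρ_p). Let C ⊆ F_2^n be the row space of G_AB and let q be the distribution on the coset space F_2^n/C given by q(c) = Σ_{e ∈ c} p^{n − wt(e)} (1−p)^{wt(e)}, where wt is the Hamming weight. Then Ŝ(ρ_B) = k + S(q). -/

import Mathlib

/-! Tracing out `A` turns `ρ_B` into `D C D`, where `D` is the diagonal `±1` matrix of the phases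
`(-1)^{q(0,t)}` and `C` is the convolution matrix `(t, t') ↦ κ(t + t')` on `F_2^n`: the edges
between `A` and `B` contribute the character `(-1)^{s · G_AB (t + t')}`, and the `A`-edges cancel.
The Walsh–Hadamard matrix diagonalises every convolution, so the spectrum of `ρ_B` is the Walsh
transform of `κ`. Expanding the product weight `p^{n-wt e}(1-p)^{wt e}` in characters shows that
this transform is `u ↦ 2^{-k} q(u + C)`. As `G_AB` has full row rank, each coset of `C` has `2^k`
elements, so every value of `q` occurs `2^k` times with weight `2^{-k}`, which adds `k` to the
entropy. -/

open Finset

/-- The field with two elements. -/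
abbrev F2 : Type := ZMod 2

/-- Hamming weight of a bit string. -/
def hamW {ι : Type*} [Fintype ι] (x : ι → F2) : ℕ :=
  (Finset.univ.filter fun i => x i ≠ 0).card

/-- Hamming distance between bit strings. -/
def hamD {ι : Type*} [Fintype ι] (x y : ι → F2) : ℕ :=
  (Finset.univ.filter fun i => x i ≠ y i).card

/-- `(-1)^c` for `c ∈ F_2`. -/
noncomputable def chr (c : F2) : ℂ := (-1 : ℂ) ^ c.val

/-- `q(x) = Σ_{{u,v} ∈ E} x_u x_v (mod 2)`. -/
def qform {V : Type*} [Fintype V] [DecidableEq V] (G : SimpleGraph V) [DecidableRel G.Adj]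
    (x : V → F2) : F2 :=
  ∑ e ∈ G.edgeFinset, Sym2.lift ⟨fun u v => x u * x v, fun u v => mul_comm _ _⟩ e

/-- The graph state of `G` after uniform dephasing with parameter `p` on every qubit:
entries `2^{-m} (-1)^{q(x)+q(y)} (2p-1)^{d(x,y)}`. -/
noncomputable def graphDeph {V : Type*} [Fintype V] [DecidableEq V] (G : SimpleGraph V)
    [DecidableRel G.Adj] (p : ℝ) : Matrix (V → F2) (V → F2) ℂ :=
  Matrix.of fun x y =>
    ((2 : ℂ) ^ Fintype.card V)⁻¹ * chr (qform G x + qform G y) *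
      ((2 * p - 1 : ℝ) : ℂ) ^ hamD x y

/-- Binary entropy `S̄(p)`, base 2. -/
noncomputable def binEnt (p : ℝ) : ℝ := -(p * Real.logb 2 p) - (1 - p) * Real.logb 2 (1 - p)

/-- Partial trace over the `A` qubits for matrices indexed by bit strings on `A ⊔ B`. -/
noncomputable def ptrSum (k n : ℕ)
    (M : Matrix ((Fin k ⊕ Fin n) → F2) ((Fin k ⊕ Fin n) → F2) ℂ) :
    Matrix (Fin n → F2) (Fin n → F2) ℂ :=
  Matrix.of fun t t' => ∑ s : Fin k → F2, M (Sum.elim s t) (Sum.elim s t')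

/-- Shannon entropy (base 2) of a (finitely supported) real vector, with `0·log₂ 0 = 0`. -/
noncomputable def shannonEnt {ι : Sort*} (q : ι → ℝ) : ℝ := -∑ᶠ i, q i * Real.logb 2 (q i)

/-- von Neumann entropy (base 2): the Shannon entropy of the eigenvalue vector. -/
noncomputable def vnEnt {n : Type*} [Fintype n] [DecidableEq n] {ρ : Matrix n n ℂ}
    (h : ρ.IsHermitian) : ℝ :=
  -∑ i, h.eigenvalues i * Real.logb 2 (h.eigenvalues i)

/-- The distribution induced on the coset space `M ⧸ K` by a weight `w` on `M`:
`c ↦ Σ_{v ∈ c} w(v)`. -/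
noncomputable def synd {M : Type*} [AddCommGroup M] [Module F2 M] (K : Submodule F2 M)
    (w : M → ℝ) (c : M ⧸ K) : ℝ :=
  ∑ᶠ v ∈ {v : M | (Submodule.Quotient.mk v : M ⧸ K) = c}, w v

open Matrix

section BitStrings

theorem F2_eq_zero_or_eq_one (a : F2) : a = 0 ∨ a = 1 := by decide +revert

theorem chr_zero : chr 0 = 1 := by simp [chr]

theorem chr_one : chr 1 = -1 := by simp [chr, ZMod.val_one]

theorem chr_add (a b : F2) : chr (a + b) = chr a * chr b := by
  rw [chr, ZMod.val_add, ← neg_one_pow_eq_pow_mod_two, pow_add, chr, chr]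

theorem chr_mul_self (a : F2) : chr a * chr a = 1 := by
  rw [← chr_add, CharTwo.add_self_eq_zero, chr_zero]

theorem chr_sum {ι : Type*} (s : Finset ι) (f : ι → F2) :
    chr (∑ i ∈ s, f i) = ∏ i ∈ s, chr (f i) := by
  classical
  induction s using Finset.induction with
  | empty => simp [chr_zero]
  | insert a s ha ih => rw [sum_insert ha, prod_insert ha, chr_add, ih]

variable {ι : Type*} [Fintype ι]

theorem hamW_le (x : ι → F2) : hamW x ≤ Fintype.card ι :=
  card_filter_le _ _

theorem hamW_ne_zero {x : ι → F2} (hx : x ≠ 0) : hamW x ≠ 0 := by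
  obtain ⟨i, hi⟩ := Function.ne_iff.mp hx
  exact card_ne_zero_of_mem (mem_filter.mpr ⟨mem_univ i, hi⟩)

theorem hamD_eq_hamW_add (x y : ι → F2) : hamD x y = hamW (x + y) := by
  simp only [hamD, hamW, Pi.add_apply, ne_eq, ← ZModModule.sub_eq_add, sub_eq_zero]

theorem hamD_self (x : ι → F2) : hamD x x = 0 := by
  simp [hamD]

theorem hamD_sum_elim {α β : Type*} [Fintype α] [Fintype β] (s s' : α → F2) (t t' : β → F2) :
    hamD (Sum.elim s t) (Sum.elim s' t') = hamD s s' + hamD t t' := by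
  simp only [hamD, card_filter, Fintype.sum_sum_type, Sum.elim_inl, Sum.elim_inr]
  rfl

theorem sum_pi_F2_prod [DecidableEq ι] {R : Type*} [CommSemiring R] (f : ι → F2 → R) :
    ∑ x : ι → F2, ∏ i, f i (x i) = ∏ i, (f i 0 + f i 1) := by
  rw [← Fintype.piFinset_univ, ← prod_univ_sum]
  congr! with i
  rw [show (univ : Finset F2) = {0, 1} from rfl, sum_pair zero_ne_one]

theorem prod_ite_eq_zero_eq_pow_hamW {M : Type*} [CommMonoid M] (x : ι → F2) (a b : M) :
    ∏ i, (if x i = 0 then a else b) = a ^ (Fintype.card ι - hamW x) * b ^ hamW x := by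
  rw [prod_ite, prod_const, prod_const, hamW, ← card_univ,
    ← card_filter_add_card_filter_not (s := univ) (fun i => x i = 0)]
  simp

theorem sum_pow_sub_hamW_mul_pow_hamW [DecidableEq ι] {R : Type*} [CommSemiring R] (a b : R) :
    ∑ x : ι → F2, a ^ (Fintype.card ι - hamW x) * b ^ hamW x = (a + b) ^ Fintype.card ι := by
  simp_rw [← prod_ite_eq_zero_eq_pow_hamW]
  rw [sum_pi_F2_prod (fun _ c => if c = 0 then a else b)]
  simp

theorem sum_pow_hamW_mul_chr [DecidableEq ι] (r : ℂ) (e : ι → F2) :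
    ∑ v : ι → F2, r ^ hamW v * chr (v ⬝ᵥ e) =
      (1 + r) ^ (Fintype.card ι - hamW e) * (1 - r) ^ hamW e := by
  have hterm (v : ι → F2) : r ^ hamW v * chr (v ⬝ᵥ e) =
      ∏ i, (if v i = 0 then 1 else r) * chr (v i * e i) := by
    rw [prod_mul_distrib, prod_ite_eq_zero_eq_pow_hamW, one_pow, one_mul, dotProduct, chr_sum]
  simp_rw [hterm]
  rw [sum_pi_F2_prod (fun i c => (if c = 0 then 1 else r) * chr (c * e i)),
    ← prod_ite_eq_zero_eq_pow_hamW]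
  refine prod_congr rfl fun i _ => ?_
  rcases F2_eq_zero_or_eq_one (e i) with h | h <;>
    simp [h, chr_zero, chr_one, add_comm, sub_eq_neg_add]

theorem sum_two_mul_sub_one_pow_hamW_mul_chr [DecidableEq ι] (p : ℝ) (e : ι → F2) :
    ∑ v : ι → F2, ((2 * p - 1 : ℝ) : ℂ) ^ hamW v * chr (v ⬝ᵥ e) =
      2 ^ Fintype.card ι * ((p ^ (Fintype.card ι - hamW e) * (1 - p) ^ hamW e : ℝ) : ℂ) := by
  obtain ⟨j, hj⟩ := Nat.exists_eq_add_of_le (hamW_le e)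
  have hplus : (1 : ℂ) + ((2 * p - 1 : ℝ) : ℂ) = 2 * p := by push_cast; ring
  have hminus : (1 : ℂ) - ((2 * p - 1 : ℝ) : ℂ) = 2 * (1 - p) := by push_cast; ring
  rw [sum_pow_hamW_mul_chr, hplus, hminus, hj, Nat.add_sub_cancel_left, mul_pow, mul_pow]
  push_cast
  ring

theorem sum_chr_dotProduct [DecidableEq ι] (w : ι → F2) :
    ∑ s : ι → F2, chr (s ⬝ᵥ w) = if w = 0 then 2 ^ Fintype.card ι else 0 := by
  have h := sum_pow_hamW_mul_chr 1 w
  simp only [one_pow, one_mul, sub_self] at h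
  rw [h]
  split_ifs with hw
  · simp [hw, hamW, one_add_one_eq_two]
  · rw [zero_pow (hamW_ne_zero hw), mul_zero]

end BitStrings

open Polynomial in
theorem Matrix.IsHermitian.sum_comp_eigenvalues_of_eq_mul_diagonal_mul {m : Type*} [Fintype m]
    [DecidableEq m] {A P Q : Matrix m m ℂ} (hA : A.IsHermitian) (hQP : Q * P = 1) {d : m → ℝ}
    (hAd : A = P * diagonal (fun i => (d i : ℂ)) * Q) (F : ℝ → ℝ) :
    ∑ i, F (hA.eigenvalues i) = ∑ i, F (d i) := by
  have hchar : A.charpoly = ∏ i, (X - C (d i : ℂ)) := by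
    rw [hAd, charpoly_mul_comm, ← mul_assoc, hQP, one_mul, charpoly_diagonal]
  have hroots := hA.roots_charpoly_eq_eigenvalues
  rw [hchar, roots_prod _ _ (prod_ne_zero_iff.mpr fun i _ => X_sub_C_ne_zero _)] at hroots
  have heig : univ.val.map hA.eigenvalues = univ.val.map d := by
    apply Multiset.map_injective Complex.ofReal_injective
    simpa [Multiset.map_map] using hroots.symm
  have := congrArg (fun s => (s.map F).sum) heig
  simp only [Multiset.map_map] at this
  exact this

section Walsh

variable {ι : Type*} [Fintype ι]

noncomputable def walshMatrix : Matrix (ι → F2) (ι → F2) ℂ := of fun x y => chr (x ⬝ᵥ y)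

def convMatrix (f : (ι → F2) → ℂ) : Matrix (ι → F2) (ι → F2) ℂ := of fun x y => f (x + y)

variable [DecidableEq ι]

noncomputable def walshTransform (f : (ι → F2) → ℂ) (u : ι → F2) : ℂ := ∑ v, f v * chr (v ⬝ᵥ u)

theorem walshMatrix_mul_self :
    walshMatrix * walshMatrix = (2 ^ Fintype.card ι : ℂ) • (1 : Matrix (ι → F2) (ι → F2) ℂ) := by
  ext x y
  simp only [mul_apply, walshMatrix, of_apply, ← chr_add, dotProduct_comm x, ← dotProduct_add,
    sum_chr_dotProduct, Matrix.smul_apply, one_apply, smul_eq_mul]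
  simp only [← ZModModule.sub_eq_add, sub_eq_zero]
  split_ifs <;> simp

theorem convMatrix_mul_walshMatrix (f : (ι → F2) → ℂ) :
    convMatrix f * walshMatrix = walshMatrix * diagonal (walshTransform f) := by
  ext x u
  rw [mul_diagonal, mul_apply, walshTransform, mul_sum]
  refine Fintype.sum_equiv (Equiv.addLeft x) _ _ fun y => ?_
  simp only [convMatrix, walshMatrix, of_apply, Equiv.coe_addLeft, add_dotProduct, chr_add]
  linear_combination f (x + y) * chr (y ⬝ᵥ u) * (chr_mul_self (x ⬝ᵥ u)).symm

theorem Matrix.IsHermitian.sum_comp_eigenvalues_of_eq_diagonal_mul_convMatrix_mul_diagonal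
    {A : Matrix (ι → F2) (ι → F2) ℂ} (hA : A.IsHermitian) {ε f : (ι → F2) → ℂ}
    (hε : ∀ x, ε x * ε x = 1) (hAf : A = diagonal ε * convMatrix f * diagonal ε)
    {d : (ι → F2) → ℝ} (hd : ∀ u, walshTransform f u = d u) (F : ℝ → ℝ) :
    ∑ i, F (hA.eigenvalues i) = ∑ i, F (d i) := by
  set W : Matrix (ι → F2) (ι → F2) ℂ := walshMatrix
  set W' := (2 ^ Fintype.card ι : ℂ)⁻¹ • W
  have hε2 : diagonal ε * diagonal ε = 1 := by
    rw [diagonal_mul_diagonal, funext hε, diagonal_one]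
  have hW'W : W' * W = 1 := by
    rw [smul_mul, walshMatrix_mul_self, smul_smul, inv_mul_cancel₀ (pow_ne_zero _ two_ne_zero),
      one_smul]
  have hWW' : W * W' = 1 := mul_eq_one_comm.mp hW'W
  refine hA.sum_comp_eigenvalues_of_eq_mul_diagonal_mul (P := diagonal ε * W)
    (Q := W' * diagonal ε) ?_ ?_ F
  · rw [mul_assoc, ← mul_assoc (diagonal ε), hε2, one_mul, hW'W]
  · have hconv : convMatrix f = W * diagonal (fun u => (d u : ℂ)) * W' := by
      rw [← funext hd, ← convMatrix_mul_walshMatrix, mul_assoc, hWW', mul_one]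
    simp only [hAf, hconv, mul_assoc]

end Walsh

namespace SimpleGraph

variable {V : Type*} [Fintype V] [DecidableEq V] (G : SimpleGraph V) [DecidableRel G.Adj]

theorem sum_edgeFinset_lift_add_swap {M : Type*} [AddCommMonoid M] (f : V → V → M) :
    ∑ e ∈ G.edgeFinset, Sym2.lift ⟨fun u v => f u v + f v u, fun _ _ => add_comm _ _⟩ e =
      ∑ u, ∑ v, if G.Adj u v then f u v else 0 := by
  rw [← Fintype.sum_prod_type', ← sum_filter]
  rw [← sum_fiberwise_of_maps_to (g := fun p : V × V => s(p.1, p.2)) (t := G.edgeFinset)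
    (fun p hp => by simpa using hp)]
  refine sum_congr rfl fun e he => ?_
  induction e using Sym2.ind with
  | _ a b =>
    have hab : G.Adj a b := by simpa using he
    have hfib : {p ∈ univ.filter (fun p : V × V => G.Adj p.1 p.2) | s(p.1, p.2) = s(a, b)} =
        {(a, b), (b, a)} := by
      ext ⟨x, y⟩
      simp only [mem_filter, mem_univ, true_and, Sym2.eq_iff, mem_insert, mem_singleton,
        Prod.mk.injEq]
      constructor
      · exact fun h => h.2
      · rintro (⟨rfl, rfl⟩ | ⟨rfl, rfl⟩)
        · exact ⟨hab, Or.inl ⟨rfl, rfl⟩⟩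
        · exact ⟨hab.symm, Or.inr ⟨rfl, rfl⟩⟩
    rw [hfib, sum_pair (by simp [hab.ne]), Sym2.lift_mk]

end SimpleGraph

theorem qform_add {V : Type*} [Fintype V] [DecidableEq V] (G : SimpleGraph V) [DecidableRel G.Adj]
    (x y : V → F2) :
    qform G (x + y) = qform G x + qform G y + ∑ u, ∑ v, if G.Adj u v then x u * y v else 0 := by
  simp only [qform, ← G.sum_edgeFinset_lift_add_swap, ← sum_add_distrib]
  refine sum_congr rfl fun e _ => ?_
  induction e using Sym2.ind with
  | _ u v => simp only [Sym2.lift_mk, Pi.add_apply]; ring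

section GraphState

theorem qform_sum_elim {α β : Type*} [Fintype α] [Fintype β] [DecidableEq α] [DecidableEq β]
    {G : SimpleGraph (α ⊕ β)} [DecidableRel G.Adj] {GAB : Matrix α β F2}
    (hGAB : ∀ u v, GAB u v = if G.Adj (Sum.inl u) (Sum.inr v) then 1 else 0)
    (s : α → F2) (t : β → F2) :
    qform G (Sum.elim s t) = qform G (Sum.elim s 0) + qform G (Sum.elim 0 t) + s ⬝ᵥ GAB *ᵥ t := by
  have hst : Sum.elim s t = Sum.elim s 0 + Sum.elim (0 : α → F2) t := by ext (i | j) <;> simp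
  rw [hst, qform_add]
  congr 1
  simp [Fintype.sum_sum_type, dotProduct, mulVec, hGAB, mul_sum]

theorem chr_qform_sum_elim_add {α β : Type*} [Fintype α] [Fintype β] [DecidableEq α]
    [DecidableEq β] {G : SimpleGraph (α ⊕ β)} [DecidableRel G.Adj] {GAB : Matrix α β F2}
    (hGAB : ∀ u v, GAB u v = if G.Adj (Sum.inl u) (Sum.inr v) then 1 else 0)
    (s : α → F2) (t t' : β → F2) :
    chr (qform G (Sum.elim s t) + qform G (Sum.elim s t')) =
      chr (qform G (Sum.elim 0 t)) * chr (qform G (Sum.elim 0 t')) *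
        chr (s ⬝ᵥ GAB *ᵥ (t + t')) := by
  rw [qform_sum_elim hGAB s t, qform_sum_elim hGAB s t', mulVec_add, dotProduct_add]
  simp only [chr_add]
  linear_combination chr (qform G (Sum.elim 0 t)) * chr (qform G (Sum.elim 0 t')) *
    chr (s ⬝ᵥ GAB *ᵥ t) * chr (s ⬝ᵥ GAB *ᵥ t') * chr_mul_self (qform G (Sum.elim s 0))

variable {k n : ℕ}

noncomputable def marginalKernel (GAB : Matrix (Fin k) (Fin n) F2) (p : ℝ) (v : Fin n → F2) : ℂ :=
  (2 ^ (k + n))⁻¹ * ((2 * p - 1 : ℝ) : ℂ) ^ hamW v * ∑ s : Fin k → F2, chr (s ⬝ᵥ GAB *ᵥ v)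

theorem ptrSum_graphDeph_eq {G : SimpleGraph (Fin k ⊕ Fin n)} [DecidableRel G.Adj]
    {GAB : Matrix (Fin k) (Fin n) F2}
    (hGAB : ∀ u v, GAB u v = if G.Adj (Sum.inl u) (Sum.inr v) then 1 else 0) (p : ℝ) :
    ptrSum k n (graphDeph G p) = diagonal (fun t => chr (qform G (Sum.elim 0 t))) *
      convMatrix (marginalKernel GAB p) * diagonal (fun t => chr (qform G (Sum.elim 0 t))) := by
  ext t t'
  simp only [ptrSum, graphDeph, of_apply, diagonal_mul, mul_diagonal, convMatrix, marginalKernel,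
    Fintype.card_sum, Fintype.card_fin, hamD_sum_elim, hamD_self, zero_add,
    chr_qform_sum_elim_add hGAB, mul_sum]
  rw [hamD_eq_hamW_add, sum_mul]
  exact sum_congr rfl fun s _ => by ring

theorem walshTransform_marginalKernel (GAB : Matrix (Fin k) (Fin n) F2) (p : ℝ)
    (u : Fin n → F2) :
    walshTransform (marginalKernel GAB p) u =
      (((2 : ℝ) ^ k)⁻¹ * ∑ s : Fin k → F2,
        p ^ (n - hamW (u + s ᵥ* GAB)) * (1 - p) ^ hamW (u + s ᵥ* GAB) : ℝ) := by
  have hterm (s : Fin k → F2) (v : Fin n → F2) :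
      chr (s ⬝ᵥ GAB *ᵥ v) * chr (v ⬝ᵥ u) = chr (v ⬝ᵥ (u + s ᵥ* GAB)) := by
    rw [dotProduct_add, chr_add, dotProduct_mulVec, dotProduct_comm (s ᵥ* GAB), mul_comm]
  calc walshTransform (marginalKernel GAB p) u
      = (2 ^ (k + n))⁻¹ * ∑ s : Fin k → F2, ∑ v : Fin n → F2,
          ((2 * p - 1 : ℝ) : ℂ) ^ hamW v * chr (v ⬝ᵥ (u + s ᵥ* GAB)) := by
        simp only [walshTransform, marginalKernel, mul_sum, sum_mul, ← hterm]
        rw [sum_comm]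
        exact sum_congr rfl fun s _ => sum_congr rfl fun v _ => by ring
    _ = _ := by
        simp only [sum_two_mul_sub_one_pow_hamW_mul_chr, Fintype.card_fin, ← mul_sum]
        push_cast
        field_simp
        ring

end GraphState

section Cosets

variable {M : Type*} [AddCommGroup M] [Fintype M]

theorem synd_eq_sum_filter [Module F2 M] (K : Submodule F2 M) [DecidableEq (M ⧸ K)]
    (w : M → ℝ) (c : M ⧸ K) :
    synd K w c = ∑ v with (Submodule.Quotient.mk v : M ⧸ K) = c, w v := by
  rw [synd, ← finsum_mem_coe_finset]
  simp

variable {R N : Type*} [Ring R] [Module R M] [AddCommGroup N] [Module R N] [Fintype N]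
  {φ : N →ₗ[R] M} [DecidableEq (M ⧸ LinearMap.range φ)]

theorem sum_filter_mk_eq_sum_add (hφ : Function.Injective φ) {β : Type*} [AddCommMonoid β]
    (w : M → β) (u : M) :
    ∑ v with (Submodule.Quotient.mk v : M ⧸ LinearMap.range φ) = Submodule.Quotient.mk u, w v =
      ∑ s, w (u + φ s) := by
  refine (sum_nbij (u + φ ·) (fun s _ => ?_) (fun s _ s' _ h => hφ (add_left_cancel h))
    (fun v hv => ?_) (fun _ _ => rfl)).symm
  · simp [Submodule.Quotient.eq]
  · obtain ⟨s, hs⟩ := (Submodule.Quotient.eq _).mp (mem_filter.mp hv).2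
    exact ⟨s, mem_univ _, by simp [hs]⟩

theorem card_filter_mk_eq (hφ : Function.Injective φ) (c : M ⧸ LinearMap.range φ) :
    #{v | (Submodule.Quotient.mk v : M ⧸ LinearMap.range φ) = c} = Fintype.card N := by
  obtain ⟨u, rfl⟩ := Submodule.Quotient.mk_surjective _ c
  rw [card_eq_sum_ones, sum_filter_mk_eq_sum_add hφ (fun _ => 1) u]
  simp

end Cosets

theorem neg_sum_inv_mul_mul_logb_of_card_fiber {ι κ : Type*} [Fintype ι] [Fintype κ]
    [DecidableEq κ] {π : ι → κ} {m : ℕ} (hm : m ≠ 0) (hπ : ∀ c, #{i | π i = c} = m)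
    {q : κ → ℝ} (hq : ∑ c, q c = 1) :
    -∑ i, (m : ℝ)⁻¹ * q (π i) * Real.logb 2 ((m : ℝ)⁻¹ * q (π i)) =
      Real.logb 2 m + -∑ c, q c * Real.logb 2 (q c) := by
  have hfib : ∀ c, m * ((m : ℝ)⁻¹ * q c * Real.logb 2 ((m : ℝ)⁻¹ * q c)) =
      q c * Real.logb 2 (q c) - Real.logb 2 m * q c := by
    intro c
    rcases eq_or_ne (q c) 0 with h | h
    · simp [h]
    · rw [Real.logb_mul (by positivity) h, Real.logb_inv]
      field_simp
      ring
  rw [← sum_fiberwise' univ π fun c => (m : ℝ)⁻¹ * q c * Real.logb 2 ((m : ℝ)⁻¹ * q c)]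
  simp only [sum_const, hπ, nsmul_eq_mul, hfib, sum_sub_distrib, ← mul_sum, hq]
  ring

theorem Matrix.vecMulLinear_injective_of_rank_eq {K m n : Type*} [Field K] [Fintype m]
    [Fintype n] [DecidableEq m] {A : Matrix m n K} (hA : A.rank = Fintype.card m) :
    Function.Injective A.vecMulLinear := by
  rw [← mulVecLin_transpose, ← LinearMap.ker_eq_bot, ← Submodule.finrank_eq_zero]
  have := LinearMap.finrank_range_add_finrank_ker Aᵀ.mulVecLin
  rw [← rank, rank_transpose, hA, Module.finrank_fintype_fun_eq_card] at this
  omega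

theorem entropy_marginal_dephased_graph_state_general (k n : ℕ)
    (G : SimpleGraph (Fin k ⊕ Fin n)) [DecidableRel G.Adj]
    (GAB : Matrix (Fin k) (Fin n) F2)
    (hGAB : ∀ u v, GAB u v = if G.Adj (Sum.inl u) (Sum.inr v) then 1 else 0)
    (hrank : GAB.rank = k)
    (p : ℝ)
    (hBherm : (ptrSum k n (graphDeph G p)).IsHermitian) :
    vnEnt hBherm =
      k + shannonEnt (synd (LinearMap.range GAB.vecMulLinear)
            (fun e => p ^ (n - hamW e) * (1 - p) ^ hamW e)) := by
  classical
  set K := LinearMap.range GAB.vecMulLinear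
  set q := synd K fun e => p ^ (n - hamW e) * (1 - p) ^ hamW e
  have : Fintype ((Fin n → F2) ⧸ K) := Fintype.ofFinite _
  have hinj := vecMulLinear_injective_of_rank_eq (A := GAB) (by simpa using hrank)
  have hq : ∑ c, q c = 1 := by
    simp only [q, synd_eq_sum_filter]
    refine (sum_fiberwise univ _ _).trans ?_
    simpa using sum_pow_sub_hamW_mul_pow_hamW (ι := Fin n) p (1 - p)
  have hfib (c : (Fin n → F2) ⧸ K) : #{t | Submodule.Quotient.mk t = c} = 2 ^ k := by
    simpa using card_filter_mk_eq hinj c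
  have hspec (u : Fin n → F2) : walshTransform (marginalKernel GAB p) u =
      (((2 ^ k : ℕ) : ℝ)⁻¹ * q (Submodule.Quotient.mk u) : ℝ) := by
    simp only [walshTransform_marginalKernel, q, synd_eq_sum_filter, sum_filter_mk_eq_sum_add hinj,
      vecMulLinear_apply]
    push_cast
    rfl
  have heig := hBherm.sum_comp_eigenvalues_of_eq_diagonal_mul_convMatrix_mul_diagonal
    (fun t => chr_mul_self _) (ptrSum_graphDeph_eq hGAB p) hspec fun x => x * Real.logb 2 x
  rw [vnEnt, heig, shannonEnt, finsum_eq_sum_of_fintype,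
    neg_sum_inv_mul_mul_logb_of_card_fiber (by positivity) hfib hq]
  simp [Real.logb_pow]

/-- The entropy of Bob's reduced state of a dephased graph state: `Ŝ(ρ_B) = k + S(q)`,
where `q` is the syndrome distribution of the row space of the biadjacency matrix `G_AB`
(which has rank `k`) with weights `p^{n-wt(e)}(1-p)^{wt(e)}`. -/
theorem entropy_marginal_dephased_graph_state (k n : ℕ)
    (G : SimpleGraph (Fin k ⊕ Fin n)) [DecidableRel G.Adj]
    (GAB : Matrix (Fin k) (Fin n) F2)
    (hGAB : ∀ u v, GAB u v = if G.Adj (Sum.inl u) (Sum.inr v) then 1 else 0)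
    (hrank : GAB.rank = k)
    (p : ℝ) (hp : p ∈ Set.Icc (0 : ℝ) 1)
    (hBherm : (ptrSum k n (graphDeph G p)).IsHermitian) :
    vnEnt hBherm =
      k + shannonEnt (synd (LinearMap.range GAB.vecMulLinear)
            (fun e => p ^ (n - hamW e) * (1 - p) ^ hamW e)) :=
  entropy_marginal_dephased_graph_state_general k n G GAB hGAB hrank p hBherm
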